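/- arXiv:2001.02131 — 4 statements merged into one kernel-verified Lean document; each statement's English description precedes it below -/
import Mathlib

section
/- Tensor representation of the Oseen–Frank energy density: for all constants k₁,…,k₅ ∈ ℝ, every matrix S ∈ ℝ^{3×3} and every vector h ∈ ℝ³, setting c := 2 vee(S_skw), one has S : Λ : S + (S⊗h) : Θ : (S⊗h) = k₁ tr(S)² + k₂ |c|² + k₃ |h|² tr(S)² + k₄ (h·c)² + k₅ |h×c|². -/
open Matrix MeasureTheory
open scoped BigOperators

noncomputable section

/-- Kronecker delta on `Fin 3`. -/
def kd (i j : Fin 3) : ℝ := if i = j then 1 else 0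

/-- Euclidean inner product on `ℝ³`. -/
def dot3 (a b : Fin 3 → ℝ) : ℝ := ∑ i, a i * b i

/-- Squared Euclidean norm on `ℝ³`. -/
def normSq (a : Fin 3 → ℝ) : ℝ := ∑ i, (a i) ^ 2

/-- Cross product on `ℝ³`. -/
def cross3 (a b : Fin 3 → ℝ) : Fin 3 → ℝ :=
  ![a 1 * b 2 - a 2 * b 1, a 2 * b 0 - a 0 * b 2, a 0 * b 1 - a 1 * b 0]

/-- Outer product `a ⊗ b`. -/
def outer (a b : Fin 3 → ℝ) : Matrix (Fin 3) (Fin 3) ℝ := Matrix.of fun i j => a i * b j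

/-- Symmetric part of a matrix. -/
def symPart (A : Matrix (Fin 3) (Fin 3) ℝ) : Matrix (Fin 3) (Fin 3) ℝ := (1 / 2 : ℝ) • (A + Aᵀ)

/-- Skew-symmetric part of a matrix. -/
def skwPart (A : Matrix (Fin 3) (Fin 3) ℝ) : Matrix (Fin 3) (Fin 3) ℝ := (1 / 2 : ℝ) • (A - Aᵀ)

/-- Frobenius inner product `A : B = tr(Aᵀ B)`. -/
def frob (A B : Matrix (Fin 3) (Fin 3) ℝ) : ℝ := ∑ i, ∑ j, A i j * B i j

/-- Squared Frobenius norm. -/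
def frobSq (A : Matrix (Fin 3) (Fin 3) ℝ) : ℝ := ∑ i, ∑ j, (A i j) ^ 2

/-- The hat map `[a]ₓ`, so that `[a]ₓ b = a × b`. -/
def hatm (a : Fin 3 → ℝ) : Matrix (Fin 3) (Fin 3) ℝ :=
  !![0, -a 2, a 1; a 2, 0, -a 0; -a 1, a 0, 0]

/-- The vee map, left inverse of the hat map: `vee A = (A₃₂, A₁₃, A₂₁)`. -/
def vee (A : Matrix (Fin 3) (Fin 3) ℝ) : Fin 3 → ℝ := ![A 2 1, A 0 2, A 1 0]

/-- Entries of the fourth-order tensor `Λ`. -/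
def lamE (k₁ k₂ : ℝ) (i j k l : Fin 3) : ℝ :=
  k₁ * kd i j * kd k l + k₂ * (kd i k * kd j l - kd i l * kd j k)

/-- The contraction `S : Λ : T`. -/
def lamQ (k₁ k₂ : ℝ) (S T : Matrix (Fin 3) (Fin 3) ℝ) : ℝ :=
  ∑ i, ∑ j, ∑ k, ∑ l, S i j * lamE k₁ k₂ i j k l * T k l

/-- Entries of the sixth-order tensor `Θ`. -/
def thE (k₃ k₄ k₅ : ℝ) (i j k l m n : Fin 3) : ℝ :=
  k₃ * kd i j * kd l m * kd k n
    + k₅ * (kd i l * kd m n * kd j k - kd m i * kd l n * kd j k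
        - kd l j * kd m n * kd i k + kd j m * kd l n * kd i k)
    + k₄ * (kd k n * kd j m * kd i l + kd k m * kd j l * kd i n + kd k l * kd j n * kd i m
        - kd k n * kd j l * kd i m - kd k m * kd j n * kd i l - kd k l * kd j m * kd i n)

/-- The contraction `(S⊗h) : Θ : (S⊗h)`. -/
def thQ (k₃ k₄ k₅ : ℝ) (S : Matrix (Fin 3) (Fin 3) ℝ) (h : Fin 3 → ℝ) : ℝ :=
  ∑ i, ∑ j, ∑ k, ∑ l, ∑ m, ∑ n, thE k₃ k₄ k₅ i j k l m n * S i j * h k * S l m * h n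

/-- Jacobian matrix of a vector field, `(∇f)_{ij} = ∂_j f_i`. -/
def jac (f : (Fin 3 → ℝ) → Fin 3 → ℝ) (x : Fin 3 → ℝ) : Matrix (Fin 3) (Fin 3) ℝ :=
  Matrix.of fun i j => fderiv ℝ f x (Pi.single j 1) i

/-- Divergence of a vector field. -/
def divg (f : (Fin 3 → ℝ) → Fin 3 → ℝ) (x : Fin 3 → ℝ) : ℝ := ∑ i, jac f x i i

/-- Curl of a vector field. -/
def curl (f : (Fin 3 → ℝ) → Fin 3 → ℝ) (x : Fin 3 → ℝ) : Fin 3 → ℝ :=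
  ![jac f x 2 1 - jac f x 1 2, jac f x 0 2 - jac f x 2 0, jac f x 1 0 - jac f x 0 1]

/-- Row-wise divergence of a matrix field, `(div A)_i = ∑_j ∂_j A_{ij}`. -/
def matDiv (A : (Fin 3 → ℝ) → Matrix (Fin 3) (Fin 3) ℝ) (x : Fin 3 → ℝ) : Fin 3 → ℝ :=
  fun i => ∑ j, fderiv ℝ (fun y => A y i j) x (Pi.single j 1)

/-! Contracting the Kronecker deltas gives `S : Λ : S = k₁ tr(S)² + k₂ (S : S - S : Sᵀ)`, and
the `k₃`, `k₅` parts of `Θ` contract to `|h|² tr(S)²` and `|(S - Sᵀ) h|²`. The `k₄` part of `Θ`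
is `ε_{ijk} ε_{lmn}`, so it contracts to the square of `ε_{ijk} S_{ij} h_k = -h · c`. Finally `S - Sᵀ` is the hat matrix
of `c = vee (S - Sᵀ)`, whence `(S - Sᵀ) h = c × h`. -/

theorem cross3_eq_crossProduct (a b : Fin 3 → ℝ) : cross3 a b = a ⨯₃ b :=
  (cross_apply a b).symm

theorem normSq_neg (a : Fin 3 → ℝ) : normSq (-a) = normSq a := by
  simp [normSq]

theorem hatm_mulVec (a b : Fin 3 → ℝ) : hatm a *ᵥ b = a ⨯₃ b := by
  ext i
  fin_cases i <;> simp [hatm, cross_apply, mulVec, dotProduct, Fin.sum_univ_three] <;> ring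

theorem hatm_vee_of_transpose_eq_neg {A : Matrix (Fin 3) (Fin 3) ℝ} (hA : Aᵀ = -A) :
    hatm (vee A) = A := by
  have hskew (i j : Fin 3) : A j i = -A i j := by simpa using congrFun (congrFun hA i) j
  ext i j
  fin_cases i <;> fin_cases j <;> simp [hatm, vee] <;>
    linarith [hskew 0 0, hskew 1 1, hskew 2 2, hskew 0 1, hskew 0 2, hskew 1 2]

theorem normSq_mulVec_of_transpose_eq_neg {A : Matrix (Fin 3) (Fin 3) ℝ} (hA : Aᵀ = -A)
    (h : Fin 3 → ℝ) : normSq (A *ᵥ h) = normSq (cross3 h (vee A)) := by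
  calc normSq (A *ᵥ h) = normSq (hatm (vee A) *ᵥ h) := by rw [hatm_vee_of_transpose_eq_neg hA]
    _ = normSq (-cross3 h (vee A)) := by rw [hatm_mulVec, cross3_eq_crossProduct, cross_anticomm]
    _ = normSq (cross3 h (vee A)) := normSq_neg _

theorem two_smul_vee_skwPart (S : Matrix (Fin 3) (Fin 3) ℝ) :
    (2 : ℝ) • vee (skwPart S) = vee (S - Sᵀ) := by
  ext i
  fin_cases i <;> simp [vee, skwPart]

theorem frob_self_sub_frob_transpose (S : Matrix (Fin 3) (Fin 3) ℝ) :
    frob S S - frob S Sᵀ = normSq (vee (S - Sᵀ)) := by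
  simp only [frob, normSq, vee, Fin.sum_univ_three, transpose_apply, Matrix.sub_apply,
    cons_val_zero, cons_val_one, cons_val]
  ring

theorem lamQ_self_eq (k₁ k₂ : ℝ) (S : Matrix (Fin 3) (Fin 3) ℝ) :
    lamQ k₁ k₂ S S = k₁ * trace S ^ 2 + k₂ * (frob S S - frob S Sᵀ) := by
  simp only [lamQ, lamE, kd, mul_ite, mul_one, mul_zero, mul_sub, mul_add, add_mul, ite_mul,
    zero_mul, sub_mul, Finset.sum_add_distrib, Finset.sum_ite_eq, Finset.mem_univ, ↓reduceIte,
    Finset.sum_sub_distrib, Finset.sum_ite_irrel, Finset.sum_const_zero]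
  simp only [frob, trace, diag, transpose_apply, Fin.sum_univ_three]
  ring

theorem one_apply_eq_kd (i j : Fin 3) : (1 : Matrix (Fin 3) (Fin 3) ℝ) i j = kd i j :=
  one_apply

def leviCivita (i j k : Fin 3) : ℝ := ((1 : Matrix (Fin 3) (Fin 3) ℝ).submatrix ![i, j, k] id).det

/-- `ε_{ijk} ε_{lmn}` is the Gram determinant `det (e_p · e_q)` of the triples `(i, j, k)` and
`(l, m, n)` of standard basis vectors. -/
theorem leviCivita_mul_leviCivita (i j k l m n : Fin 3) :
    leviCivita i j k * leviCivita l m n =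
      kd k n * kd j m * kd i l + kd k m * kd j l * kd i n + kd k l * kd j n * kd i m
        - kd k n * kd j l * kd i m - kd k m * kd j n * kd i l - kd k l * kd j m * kd i n := by
  rw [leviCivita, leviCivita, ← det_transpose ((1 : Matrix (Fin 3) (Fin 3) ℝ).submatrix ![l, m, n] id),
    ← det_mul, transpose_submatrix, ← submatrix_mul _ _ _ id _ Function.bijective_id,
    transpose_one, mul_one, det_fin_three]
  simp only [submatrix_apply, one_apply_eq_kd, cons_val_zero, cons_val_one, cons_val_two,
    head_cons, tail_cons]
  ring

theorem sum_leviCivita_mul (S : Matrix (Fin 3) (Fin 3) ℝ) (h : Fin 3 → ℝ) :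
    ∑ i, ∑ j, ∑ k, leviCivita i j k * S i j * h k = -(dot3 h (vee (S - Sᵀ))) := by
  simp only [leviCivita, det_fin_three, submatrix_apply, one_apply, Fin.sum_univ_three,
    cons_val_zero, cons_val_one, cons_val, id_eq, Fin.reduceEq, ↓reduceIte, dot3, vee,
    Matrix.sub_apply, transpose_apply]
  ring

theorem sum_leviCivita_mul_leviCivita (S : Matrix (Fin 3) (Fin 3) ℝ) (h : Fin 3 → ℝ) :
    ∑ i, ∑ j, ∑ k, ∑ l, ∑ m, ∑ n,
        leviCivita i j k * leviCivita l m n * S i j * h k * S l m * h n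
      = (dot3 h (vee (S - Sᵀ))) ^ 2 := by
  rw [← neg_sq, ← sum_leviCivita_mul, sq]
  simp only [Finset.sum_mul, Finset.mul_sum]
  iterate 6 refine Finset.sum_congr rfl fun _ _ => ?_
  ring

theorem thQ_eq_linear_combination (k₃ k₄ k₅ : ℝ) (S : Matrix (Fin 3) (Fin 3) ℝ) (h : Fin 3 → ℝ) :
    thQ k₃ k₄ k₅ S h = k₃ * thQ 1 0 0 S h + k₄ * thQ 0 1 0 S h + k₅ * thQ 0 0 1 S h := by
  simp only [thQ, Finset.mul_sum, ← Finset.sum_add_distrib]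
  iterate 6 refine Finset.sum_congr rfl fun _ _ => ?_
  simp only [thE]
  ring

theorem thQ_one_zero_zero (S : Matrix (Fin 3) (Fin 3) ℝ) (h : Fin 3 → ℝ) :
    thQ 1 0 0 S h = normSq h * trace S ^ 2 := by
  simp only [thQ, thE, kd, mul_ite, mul_one, mul_zero, zero_mul, add_zero, ite_mul, one_mul,
    Finset.sum_ite_eq, Finset.mem_univ, ↓reduceIte, Finset.sum_ite_irrel, Finset.sum_const_zero]
  simp only [normSq, trace, diag, Fin.sum_univ_three]
  ring

theorem thQ_zero_one_zero (S : Matrix (Fin 3) (Fin 3) ℝ) (h : Fin 3 → ℝ) :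
    thQ 0 1 0 S h = (dot3 h (vee (S - Sᵀ))) ^ 2 := by
  simp only [thQ, thE, zero_mul, add_zero, one_mul, zero_add, ← leviCivita_mul_leviCivita]
  exact sum_leviCivita_mul_leviCivita S h

theorem thQ_zero_zero_one (S : Matrix (Fin 3) (Fin 3) ℝ) (h : Fin 3 → ℝ) :
    thQ 0 0 1 S h = normSq ((S - Sᵀ) *ᵥ h) := by
  simp only [thQ, thE, kd, mul_ite, mul_one, mul_zero, ite_self, mul_add, mul_sub, zero_add,
    add_zero, sub_self, add_mul, sub_mul, ite_mul, one_mul, zero_mul, Finset.sum_add_distrib,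
    Finset.sum_sub_distrib, Finset.sum_ite_irrel, Finset.sum_ite_eq, Finset.mem_univ, ↓reduceIte,
    Finset.sum_const_zero, Finset.sum_ite_eq']
  simp only [normSq, mulVec, dotProduct, Matrix.sub_apply, transpose_apply, Fin.sum_univ_three]
  ring

/-- Tensor representation of the Oseen–Frank energy density: with `c := 2 vee(S_skw)`,
`S : Λ : S + (S⊗h) : Θ : (S⊗h)
  = k₁ tr(S)² + k₂ |c|² + k₃ |h|² tr(S)² + k₄ (h·c)² + k₅ |h×c|²`. -/
theorem energy_tensor_repr (k₁ k₂ k₃ k₄ k₅ : ℝ) (S : Matrix (Fin 3) (Fin 3) ℝ)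
    (h : Fin 3 → ℝ) (c : Fin 3 → ℝ) (hc : c = (2 : ℝ) • vee (skwPart S)) :
    lamQ k₁ k₂ S S + thQ k₃ k₄ k₅ S h
      = k₁ * (Matrix.trace S) ^ 2 + k₂ * normSq c + k₃ * normSq h * (Matrix.trace S) ^ 2
        + k₄ * dot3 h c ^ 2 + k₅ * normSq (cross3 h c) := by
  have hskew : (S - Sᵀ)ᵀ = -(S - Sᵀ) := by rw [transpose_sub, transpose_transpose, neg_sub]
  rw [hc, two_smul_vee_skwPart, lamQ_self_eq, frob_self_sub_frob_transpose, thQ_eq_linear_combination,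
    thQ_one_zero_zero, thQ_zero_one_zero, thQ_zero_zero_one,
    normSq_mulVec_of_transpose_eq_neg hskew]
  ring
end
end

section
/- Quasi-convexity of the Θ-quadratic form for fixed director: let k₃, k₄, k₅ > 0, let D ⊂ ℝ³ be a bounded open set, let d ∈ ℝ³ be a fixed vector, let A ∈ ℝ^{3×3}, and let ξ : ℝ³ → ℝ³ be smooth with compact support contained in D. Then ∫_D ((A + ∇ξ(y))⊗d) : Θ : ((A + ∇ξ(y))⊗d) dy ≥ vol(D) · ((A⊗d) : Θ : (A⊗d)), where vol(D) is the Lebesgue measure of D. -/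
open Matrix MeasureTheory
open scoped BigOperators

noncomputable section

/-! ### Auxiliary lemmas -/

section Aux

lemma kd00' : kd 0 0 = 1 := rfl
lemma kd11' : kd 1 1 = 1 := rfl
lemma kd22' : kd 2 2 = 1 := rfl
lemma kd01' : kd 0 1 = 0 := rfl
lemma kd02' : kd 0 2 = 0 := rfl
lemma kd10' : kd 1 0 = 0 := rfl
lemma kd12' : kd 1 2 = 0 := rfl
lemma kd20' : kd 2 0 = 0 := rfl
lemma kd21' : kd 2 1 = 0 := rfl

set_option maxHeartbeats 4000000 in
lemma thQ_formula (k₃ k₄ k₅ : ℝ) (S : Matrix (Fin 3) (Fin 3) ℝ) (h : Fin 3 → ℝ) :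
    thQ k₃ k₄ k₅ S h =
      k₃ * (S 0 0 + S 1 1 + S 2 2)^2 * (h 0 ^2 + h 1 ^2 + h 2 ^2)
      + k₅ * (((S 0 2 - S 2 0) * h 2 - (S 1 0 - S 0 1) * h 1)^2
            + ((S 1 0 - S 0 1) * h 0 - (S 2 1 - S 1 2) * h 2)^2
            + ((S 2 1 - S 1 2) * h 1 - (S 0 2 - S 2 0) * h 0)^2)
      + k₄ * ((S 2 1 - S 1 2) * h 0 + (S 0 2 - S 2 0) * h 1 + (S 1 0 - S 0 1) * h 2)^2 := by
  simp only [thQ, thE, Fin.sum_univ_three, kd00', kd11', kd22', kd01', kd02', kd10', kd12',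
    kd20', kd21', mul_zero, zero_mul, mul_one, one_mul, add_zero, zero_add, sub_zero, zero_sub,
    sub_self, neg_zero, neg_mul]
  ring

/-- The cross (bilinear) term in the expansion of `thQ (S + T) h`. -/
def crossL (k₃ k₄ k₅ : ℝ) (S : Matrix (Fin 3) (Fin 3) ℝ) (h : Fin 3 → ℝ)
    (T : Matrix (Fin 3) (Fin 3) ℝ) : ℝ :=
  2*k₃*(S 0 0 + S 1 1 + S 2 2)*(T 0 0 + T 1 1 + T 2 2)*(h 0^2 + h 1^2 + h 2^2)
  + 2*k₅*( ((S 0 2 - S 2 0)*h 2 - (S 1 0 - S 0 1)*h 1) * ((T 0 2 - T 2 0)*h 2 - (T 1 0 - T 0 1)*h 1)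
         + ((S 1 0 - S 0 1)*h 0 - (S 2 1 - S 1 2)*h 2) * ((T 1 0 - T 0 1)*h 0 - (T 2 1 - T 1 2)*h 2)
         + ((S 2 1 - S 1 2)*h 1 - (S 0 2 - S 2 0)*h 0) * ((T 2 1 - T 1 2)*h 1 - (T 0 2 - T 2 0)*h 0))
  + 2*k₄*((S 2 1 - S 1 2)*h 0 + (S 0 2 - S 2 0)*h 1 + (S 1 0 - S 0 1)*h 2)
        *((T 2 1 - T 1 2)*h 0 + (T 0 2 - T 2 0)*h 1 + (T 1 0 - T 0 1)*h 2)

lemma thQ_decomp (k₃ k₄ k₅ : ℝ) (S T : Matrix (Fin 3) (Fin 3) ℝ) (h : Fin 3 → ℝ) :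
    thQ k₃ k₄ k₅ (S + T) h
      = thQ k₃ k₄ k₅ S h + crossL k₃ k₄ k₅ S h T + thQ k₃ k₄ k₅ T h := by
  rw [thQ_formula, thQ_formula, thQ_formula]
  simp only [Matrix.add_apply, crossL]
  ring

lemma thQ_nonneg (k₃ k₄ k₅ : ℝ) (h3 : 0 ≤ k₃) (h4 : 0 ≤ k₄) (h5 : 0 ≤ k₅)
    (T : Matrix (Fin 3) (Fin 3) ℝ) (h : Fin 3 → ℝ) : 0 ≤ thQ k₃ k₄ k₅ T h := by
  rw [thQ_formula]
  positivity

lemma thQ_zero (k₃ k₄ k₅ : ℝ) (h : Fin 3 → ℝ) : thQ k₃ k₄ k₅ 0 h = 0 := by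
  rw [thQ_formula]; simp

lemma crossL_zero (k₃ k₄ k₅ : ℝ) (S : Matrix (Fin 3) (Fin 3) ℝ) (h : Fin 3 → ℝ) :
    crossL k₃ k₄ k₅ S h 0 = 0 := by
  simp [crossL]

/-- Coefficient matrix of the linear form `crossL k₃ k₄ k₅ S h ·`. -/
def cfM (k₃ k₄ k₅ : ℝ) (S : Matrix (Fin 3) (Fin 3) ℝ) (h : Fin 3 → ℝ) (i j : Fin 3) : ℝ :=
  crossL k₃ k₄ k₅ S h (Matrix.of fun a b => if a = i ∧ b = j then 1 else 0)

set_option maxHeartbeats 4000000 in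
lemma crossL_repr (k₃ k₄ k₅ : ℝ) (S : Matrix (Fin 3) (Fin 3) ℝ) (h : Fin 3 → ℝ)
    (T : Matrix (Fin 3) (Fin 3) ℝ) :
    crossL k₃ k₄ k₅ S h T = ∑ i, ∑ j, cfM k₃ k₄ k₅ S h i j * T i j := by
  simp only [cfM, crossL, Matrix.of_apply, Fin.sum_univ_three, Fin.reduceEq, and_true,
    true_and, and_false, false_and, if_true, if_false, reduceIte]
  ring

lemma integral_fderiv_apply_eq_zero {g : (Fin 3 → ℝ) → ℝ} (hg : ContDiff ℝ (⊤ : ℕ∞) g)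
    (hgc : HasCompactSupport g) (v : Fin 3 → ℝ) : ∫ x, fderiv ℝ g x v = 0 := by
  have hder : Continuous fun x => fderiv ℝ g x v :=
    (hg.continuous_fderiv (by simp)).clm_apply continuous_const
  have hsupp : HasCompactSupport fun x => fderiv ℝ g x v :=
    (hgc.fderiv ℝ).comp_left (g := fun L : (Fin 3 → ℝ) →L[ℝ] ℝ => L v) rfl
  have hz : (fun x : Fin 3 → ℝ => fderiv ℝ (fun _ => (1:ℝ)) x v * g x) = fun _ => 0 := by
    funext x; simp
  have i1 : Integrable (fun x : Fin 3 → ℝ => fderiv ℝ (fun _ => (1:ℝ)) x v * g x) volume := by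
    rw [hz]; exact integrable_zero _ _ _
  have i2 : Integrable (fun x : Fin 3 → ℝ => (1:ℝ) * fderiv ℝ g x v) volume := by
    simpa using hder.integrable_of_hasCompactSupport hsupp
  have i3 : Integrable (fun x : Fin 3 → ℝ => (1:ℝ) * g x) volume := by
    simpa using hg.continuous.integrable_of_hasCompactSupport hgc
  have h1 := integral_mul_fderiv_eq_neg_fderiv_mul_of_integrable i1 i2 i3
    (fun x _ => differentiable_const (1:ℝ) x) (fun x _ => hg.differentiable (by simp) x)
  simpa [hz] using h1

lemma jac_entry_eq {ξ : (Fin 3 → ℝ) → Fin 3 → ℝ} (hξ : ContDiff ℝ (⊤ : ℕ∞) ξ) (i j : Fin 3)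
    (y : Fin 3 → ℝ) : jac ξ y i j = fderiv ℝ (fun x => ξ x i) y (Pi.single j 1) := by
  have hd : HasFDerivAt ξ (fderiv ℝ ξ y) y := (hξ.differentiable (by simp) y).hasFDerivAt
  have h2 := ((ContinuousLinearMap.proj i : (Fin 3 → ℝ) →L[ℝ] ℝ)).hasFDerivAt.comp y hd
  rw [show (fun x => ξ x i)
      = (⇑(ContinuousLinearMap.proj i : (Fin 3 → ℝ) →L[ℝ] ℝ) ∘ ξ) from rfl, h2.fderiv]
  rfl

lemma integral_jac_eq_zero {ξ : (Fin 3 → ℝ) → Fin 3 → ℝ} (hξ : ContDiff ℝ (⊤ : ℕ∞) ξ)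
    (hξc : HasCompactSupport ξ) (i j : Fin 3) : ∫ y, jac ξ y i j = 0 := by
  have hgi : ContDiff ℝ (⊤ : ℕ∞) (fun x => ξ x i) := (contDiff_pi.1 hξ) i
  have hci : HasCompactSupport (fun x => ξ x i) :=
    hξc.comp_left (g := fun v : Fin 3 → ℝ => v i) rfl
  calc ∫ y, jac ξ y i j = ∫ y, fderiv ℝ (fun x => ξ x i) y (Pi.single j 1) := by
        simp_rw [jac_entry_eq hξ]
    _ = 0 := integral_fderiv_apply_eq_zero hgi hci _

lemma jac_continuous {ξ : (Fin 3 → ℝ) → Fin 3 → ℝ} (hξ : ContDiff ℝ (⊤ : ℕ∞) ξ) (i j : Fin 3) :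
    Continuous fun y => jac ξ y i j := by
  have h1 : Continuous fun y => fderiv ℝ ξ y (Pi.single j 1) :=
    (hξ.continuous_fderiv (by simp)).clm_apply continuous_const
  exact (continuous_apply i).comp h1

lemma jac_eq_zero_of_nmem {ξ : (Fin 3 → ℝ) → Fin 3 → ℝ} {y : Fin 3 → ℝ}
    (hy : y ∉ tsupport ξ) : jac ξ y = 0 := by
  have h0 : fderiv ℝ ξ y = 0 := by
    by_contra h
    exact hy (support_fderiv_subset ℝ (Function.mem_support.2 h))
  funext i j
  simp [jac, h0]

end Aux

/-- Quasi-convexity of the Θ-quadratic form for a fixed director `d`: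
`∫_D ((A + ∇ξ)⊗d) : Θ : ((A + ∇ξ)⊗d) dy ≥ vol(D) ⬝ ((A⊗d) : Θ : (A⊗d))`. -/
theorem thQ_quasiconvex (k₃ k₄ k₅ : ℝ) (hk₃ : 0 < k₃) (hk₄ : 0 < k₄) (hk₅ : 0 < k₅)
    (D : Set (Fin 3 → ℝ)) (hDo : IsOpen D) (hDb : Bornology.IsBounded D)
    (d : Fin 3 → ℝ) (A : Matrix (Fin 3) (Fin 3) ℝ) (ξ : (Fin 3 → ℝ) → Fin 3 → ℝ)
    (hξ : ContDiff ℝ (⊤ : ℕ∞) ξ) (hξc : HasCompactSupport ξ) (hξD : tsupport ξ ⊆ D) :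
    (volume D).toReal * thQ k₃ k₄ k₅ A d
      ≤ ∫ y in D, thQ k₃ k₄ k₅ (A + jac ξ y) d :=  by
  have hDm : MeasurableSet D := hDo.measurableSet
  have hDfin : volume D < ⊤ := hDb.measure_lt_top
  have hc : ∀ i j : Fin 3, Continuous fun y => jac ξ y i j := fun i j => jac_continuous hξ i j
  have hInt : ∀ i j : Fin 3, Integrable (fun y => jac ξ y i j) volume := fun i j =>
    (hc i j).integrable_of_hasCompactSupport
      (HasCompactSupport.intro hξc fun y hy => by rw [jac_eq_zero_of_nmem hy]; rfl)
  have hLz : ∀ y, y ∉ tsupport ξ → crossL k₃ k₄ k₅ A d (jac ξ y) = 0 := fun y hy => by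
    rw [jac_eq_zero_of_nmem hy, crossL_zero]
  have hQz : ∀ y, y ∉ tsupport ξ → thQ k₃ k₄ k₅ (jac ξ y) d = 0 := fun y hy => by
    rw [jac_eq_zero_of_nmem hy, thQ_zero]
  have hLcont : Continuous fun y => crossL k₃ k₄ k₅ A d (jac ξ y) := by
    have he : (fun y => crossL k₃ k₄ k₅ A d (jac ξ y))
        = fun y => ∑ i, ∑ j, cfM k₃ k₄ k₅ A d i j * jac ξ y i j :=
      funext fun y => crossL_repr k₃ k₄ k₅ A d (jac ξ y)
    rw [he]
    exact continuous_finset_sum _ fun i _ =>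
      continuous_finset_sum _ fun j _ => continuous_const.mul (hc i j)
  have hQcont : Continuous fun y => thQ k₃ k₄ k₅ (jac ξ y) d := by
    have he : (fun y => thQ k₃ k₄ k₅ (jac ξ y) d)
        = fun y => ∑ i, ∑ j, ∑ k, ∑ l, ∑ m, ∑ n,
            thE k₃ k₄ k₅ i j k l m n * jac ξ y i j * d k * jac ξ y l m * d n := rfl
    rw [he]
    exact continuous_finset_sum _ fun i _ => continuous_finset_sum _ fun j _ =>
      continuous_finset_sum _ fun k _ => continuous_finset_sum _ fun l _ =>
      continuous_finset_sum _ fun m _ => continuous_finset_sum _ fun n _ =>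
      (((continuous_const.mul (hc i j)).mul continuous_const).mul (hc l m)).mul continuous_const
  have hIntL : Integrable (fun y => crossL k₃ k₄ k₅ A d (jac ξ y)) volume :=
    hLcont.integrable_of_hasCompactSupport (HasCompactSupport.intro hξc hLz)
  have hIntQ : Integrable (fun y => thQ k₃ k₄ k₅ (jac ξ y) d) volume :=
    hQcont.integrable_of_hasCompactSupport (HasCompactSupport.intro hξc hQz)
  have hIL0 : ∫ y, crossL k₃ k₄ k₅ A d (jac ξ y) = 0 := by
    have hrepr2 : (fun y => crossL k₃ k₄ k₅ A d (jac ξ y))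
        = fun y => ∑ p : Fin 3 × Fin 3, cfM k₃ k₄ k₅ A d p.1 p.2 * jac ξ y p.1 p.2 := by
      funext y
      rw [crossL_repr]
      exact (Fintype.sum_prod_type
        (f := fun p : Fin 3 × Fin 3 => cfM k₃ k₄ k₅ A d p.1 p.2 * jac ξ y p.1 p.2)).symm
    rw [hrepr2, integral_finset_sum _ fun p _ => (hInt p.1 p.2).const_mul _]
    refine Finset.sum_eq_zero fun p _ => ?_
    rw [integral_const_mul, integral_jac_eq_zero hξ hξc, mul_zero]
  have hptw : ∀ y, thQ k₃ k₄ k₅ (A + jac ξ y) d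
      = thQ k₃ k₄ k₅ A d + crossL k₃ k₄ k₅ A d (jac ξ y) + thQ k₃ k₄ k₅ (jac ξ y) d :=
    fun y => thQ_decomp k₃ k₄ k₅ A (jac ξ y) d
  have split : ∫ y in D, thQ k₃ k₄ k₅ (A + jac ξ y) d
      = (volume D).toReal * thQ k₃ k₄ k₅ A d
        + (∫ y in D, crossL k₃ k₄ k₅ A d (jac ξ y))
        + ∫ y in D, thQ k₃ k₄ k₅ (jac ξ y) d := by
    rw [setIntegral_congr_fun hDm fun y _ => hptw y]
    have h1 : IntegrableOn (fun _ : Fin 3 → ℝ => thQ k₃ k₄ k₅ A d) D volume :=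
      integrableOn_const hDfin.ne
    have h12 : IntegrableOn
        (fun y => thQ k₃ k₄ k₅ A d + crossL k₃ k₄ k₅ A d (jac ξ y)) D volume :=
      h1.add hIntL.integrableOn
    rw [integral_add h12 hIntQ.integrableOn, integral_add h1 hIntL.integrableOn,
      setIntegral_const, smul_eq_mul, measureReal_def]
  have hLD : ∫ y in D, crossL k₃ k₄ k₅ A d (jac ξ y) = 0 := by
    rw [setIntegral_eq_integral_of_forall_compl_eq_zero
      fun y hy => hLz y fun hmem => hy (hξD hmem)]
    exact hIL0
  have hQD : 0 ≤ ∫ y in D, thQ k₃ k₄ k₅ (jac ξ y) d :=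
    setIntegral_nonneg hDm fun y _ => thQ_nonneg _ _ _ hk₃.le hk₄.le hk₅.le _ _
  rw [split, hLD]
  linarith
end
end

section
/- For every smooth compactly supported vector field a : ℝ³ → ℝ³ one has ∫_{ℝ³} |a|² |∇a|² dx ≤ ∫_{ℝ³} ( (3/2)(div a)² |a|² + (a·curl a)² + 2 |a × curl a|² ) dx. -/
open Matrix MeasureTheory
open scoped BigOperators

noncomputable section

/-! ### Auxiliary machinery -/

abbrev E3' := Fin 3 → ℝ

def e3 (j : Fin 3) : E3' := Pi.single j 1

/-- directional (partial) derivative of a scalar function -/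
def pd (f : E3' → ℝ) (j : Fin 3) (x : E3') : ℝ := fderiv ℝ f x (e3 j)

/-- integration by parts: the integral of a directional derivative of a smooth
compactly supported function vanishes. -/
lemma integral_pd_eq_zero (g : E3' → ℝ) (hg : ContDiff ℝ (⊤ : ℕ∞) g)
    (hgc : HasCompactSupport g) (v : E3') :
    ∫ x, fderiv ℝ g x v = 0 := by
  obtain ⟨D, g_lip⟩ : ∃ D, LipschitzWith D g :=
    ContDiff.lipschitzWith_of_hasCompactSupport hgc hg (by simp)
  have h := LipschitzWith.integral_lineDeriv_mul_eq (μ := (volume : Measure E3'))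
    (LipschitzWith.const (1:ℝ)) g_lip hgc (-v)
  have hz : ∀ x : E3', lineDeriv ℝ (fun _ : E3' => (1:ℝ)) x (-v) * g x = 0 := by
    intro x; simp [lineDeriv, deriv_const]
  rw [integral_congr_ae (Filter.Eventually.of_forall hz), integral_zero] at h
  have h2 : ∀ x : E3', lineDeriv ℝ g x (-(-v)) * (1:ℝ) = fderiv ℝ g x v := by
    intro x
    rw [neg_neg, ((hg.differentiable (by simp)).differentiableAt).lineDeriv_eq_fderiv, mul_one]
  rw [← integral_congr_ae (Filter.Eventually.of_forall h2)]
  exact h.symm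

lemma pd_mul {f g : E3' → ℝ} (hf : ContDiff ℝ (⊤ : ℕ∞) f) (hg : ContDiff ℝ (⊤ : ℕ∞) g) (j : Fin 3) (x : E3') :
    pd (fun y => f y * g y) j x = pd f j x * g x + f x * pd g j x := by
  unfold pd
  rw [fderiv_fun_mul ((hf.differentiable (by simp)).differentiableAt)
    ((hg.differentiable (by simp)).differentiableAt)]
  simp; ring

lemma pd_sum {F : Fin 3 → E3' → ℝ} (hF : ∀ i, ContDiff ℝ (⊤ : ℕ∞) (F i)) (j : Fin 3) (x : E3') :
    pd (fun y => ∑ i, F i y) j x = ∑ i, pd (F i) j x := by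
  unfold pd
  rw [fderiv_fun_sum (fun i _ => ((hF i).differentiable (by simp)).differentiableAt)]
  simp

lemma pd_sub {f g : E3' → ℝ} (hf : ContDiff ℝ (⊤ : ℕ∞) f) (hg : ContDiff ℝ (⊤ : ℕ∞) g) (j : Fin 3) (x : E3') :
    pd (fun y => f y - g y) j x = pd f j x - pd g j x := by
  unfold pd
  rw [fderiv_fun_sub ((hf.differentiable (by simp)).differentiableAt)
    ((hg.differentiable (by simp)).differentiableAt)]
  simp

/-- smoothness of the partial derivative -/
lemma pd_contDiff {f : E3' → ℝ} (hf : ContDiff ℝ (⊤ : ℕ∞) f) (j : Fin 3) :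
    ContDiff ℝ (⊤ : ℕ∞) (pd f j) := by
  have h1 : ContDiff ℝ (⊤ : ℕ∞) (fderiv ℝ f) := hf.fderiv_right (by simp)
  exact (ContinuousLinearMap.apply ℝ ℝ (e3 j)).contDiff.comp h1

/-- Clairaut's theorem for `pd`. -/
lemma pd_comm {f : E3' → ℝ} (hf : ContDiff ℝ (⊤ : ℕ∞) f) (j k : Fin 3) (x : E3') :
    pd (pd f j) k x = pd (pd f k) j x := by
  have hsym : IsSymmSndFDerivAt ℝ f x := hf.contDiffAt.isSymmSndFDerivAt (by norm_num; exact (WithTop.coe_le_coe.2 (le_top : (2:ℕ∞) ≤ ⊤) : ((2:ℕ∞) : WithTop ℕ∞) ≤ ((⊤:ℕ∞) : WithTop ℕ∞)))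
  have hd : ContDiff ℝ (⊤ : ℕ∞) (fderiv ℝ f) := hf.fderiv_right (by simp)
  have key : ∀ m n : Fin 3, pd (pd f m) n x = fderiv ℝ (fderiv ℝ f) x (e3 n) (e3 m) := by
    intro m n
    unfold pd
    rw [fderiv_clm_apply ((hd.differentiable (by simp)).differentiableAt)
      (differentiableAt_const (e3 m))]
    simp
  rw [key j k, key k j, hsym (e3 k) (e3 j)]

lemma comp_smooth {a : E3' → E3'} (ha : ContDiff ℝ (⊤ : ℕ∞) a) (i : Fin 3) :
    ContDiff ℝ (⊤ : ℕ∞) (fun x => a x i) := contDiff_pi.1 ha i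

lemma fderiv_comp_apply {a : E3' → E3'} (ha : ContDiff ℝ (⊤ : ℕ∞) a) (i : Fin 3) (v : E3') (x : E3') :
    fderiv ℝ a x v i = fderiv ℝ (fun y => a y i) x v := by
  have h : ∀ i, DifferentiableAt ℝ (fun y => a y i) x := fun i =>
    ((comp_smooth ha i).differentiable (by simp)).differentiableAt
  have h2 : fderiv ℝ (fun x i => a x i) x = ContinuousLinearMap.pi
      fun i => fderiv ℝ (fun y => a y i) x := fderiv_pi h
  have h3 : fderiv ℝ a x = ContinuousLinearMap.pi
      fun i => fderiv ℝ (fun y => a y i) x := h2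
  rw [h3, ContinuousLinearMap.pi_apply]

/-- the pointwise divergence identity -/
lemma div_identity (p : Fin 3 → E3' → ℝ) (hp : ∀ i, ContDiff ℝ (⊤ : ℕ∞) (p i)) (x : E3') :
    ∑ j, pd (fun y => (∑ i, p i y * p i y) *
        ((∑ k, p k y * pd (p j) k y) - p j y * ∑ k, pd (p k) k y)) j x
    = (∑ j, (∑ i, 2 * p i x * pd (p i) j x) *
        ((∑ k, p k x * pd (p j) k x) - p j x * ∑ k, pd (p k) k x))
      + (∑ i, p i x * p i x) *
        ((∑ j, ∑ k, pd (p k) j x * pd (p j) k x) - (∑ k, pd (p k) k x) ^ 2) := by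
  have hq : ∀ i k, ContDiff ℝ (⊤ : ℕ∞) (pd (p i) k) := fun i k => pd_contDiff (hp i) k
  have hΦ : ContDiff ℝ (⊤ : ℕ∞) (fun y => ∑ i, p i y * p i y) :=
    ContDiff.sum fun i _ => (hp i).mul (hp i)
  have hd : ContDiff ℝ (⊤ : ℕ∞) (fun y => ∑ k, pd (p k) k y) := ContDiff.sum fun k _ => hq k k
  have hW : ∀ j, ContDiff ℝ (⊤ : ℕ∞) (fun y => (∑ k, p k y * pd (p j) k y) - p j y * ∑ k, pd (p k) k y) :=
    fun j => ((ContDiff.sum fun k _ => (hp k).mul (hq j k)).sub ((hp j).mul hd))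
  have hpdΦ : ∀ j, pd (fun y => ∑ i, p i y * p i y) j x = ∑ i, 2 * p i x * pd (p i) j x := by
    intro j
    rw [pd_sum (fun i => (hp i).mul (hp i))]
    refine Finset.sum_congr rfl fun i _ => ?_
    rw [pd_mul (hp i) (hp i)]; ring
  have hpdW : ∀ j, pd (fun y => (∑ k, p k y * pd (p j) k y) - p j y * ∑ k, pd (p k) k y) j x
      = (∑ k, (pd (p k) j x * pd (p j) k x + p k x * pd (pd (p j) k) j x))
        - (pd (p j) j x * (∑ k, pd (p k) k x) + p j x * ∑ k, pd (pd (p k) k) j x) := by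
    intro j
    rw [pd_sub (ContDiff.sum fun k _ => (hp k).mul (hq j k)) ((hp j).mul hd),
      pd_sum (fun k => (hp k).mul (hq j k)), pd_mul (hp j) hd,
      pd_sum (fun k => hq k k)]
    congr 1
    exact Finset.sum_congr rfl fun k _ => pd_mul (hp k) (hq j k) j x
  have hmain : ∀ j, pd (fun y => (∑ i, p i y * p i y) *
        ((∑ k, p k y * pd (p j) k y) - p j y * ∑ k, pd (p k) k y)) j x
      = pd (fun y => ∑ i, p i y * p i y) j x *
          ((∑ k, p k x * pd (p j) k x) - p j x * ∑ k, pd (p k) k x)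
        + (∑ i, p i x * p i x) *
          pd (fun y => (∑ k, p k y * pd (p j) k y) - p j y * ∑ k, pd (p k) k y) j x :=
    fun j => pd_mul hΦ (hW j) j x
  simp only [hmain, hpdΦ, hpdW]
  have c : ∀ j k : Fin 3, pd (pd (p j) k) j x = pd (pd (p j) j) k x :=
    fun j k => pd_comm (hp j) k j x
  simp only [Fin.sum_univ_three]
  rw [c 0 1, c 0 2, c 1 0, c 1 2, c 2 0, c 2 1]
  ring

lemma normSq_nonneg' (w : Fin 3 → ℝ) : 0 ≤ normSq w :=
  Finset.sum_nonneg fun i _ => sq_nonneg _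

/-- the pointwise algebraic inequality -/
lemma key_ineq (v : Fin 3 → ℝ) (A : Matrix (Fin 3) (Fin 3) ℝ) :
    normSq v * frobSq A ≤ (3 / 2) * (∑ i, A i i) ^ 2 * normSq v
      + dot3 v ![A 2 1 - A 1 2, A 0 2 - A 2 0, A 1 0 - A 0 1] ^ 2
      + 2 * normSq (cross3 v ![A 2 1 - A 1 2, A 0 2 - A 2 0, A 1 0 - A 0 1])
      + ((∑ j, (∑ i, 2 * v i * A i j) * ((∑ k, v k * A j k) - v j * ∑ k, A k k))
        + normSq v * ((∑ j, ∑ k, A k j * A j k) - (∑ k, A k k) ^ 2)) := by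
  have h : (3 / 2) * (∑ i, A i i) ^ 2 * normSq v
      + dot3 v ![A 2 1 - A 1 2, A 0 2 - A 2 0, A 1 0 - A 0 1] ^ 2
      + 2 * normSq (cross3 v ![A 2 1 - A 1 2, A 0 2 - A 2 0, A 1 0 - A 0 1])
      + ((∑ j, (∑ i, 2 * v i * A i j) * ((∑ k, v k * A j k) - v j * ∑ k, A k k))
        + normSq v * ((∑ j, ∑ k, A k j * A j k) - (∑ k, A k k) ^ 2))
      - normSq v * frobSq A
      = normSq (fun j => (∑ i, A i i) / 2 * v j - ∑ i, v i * A i j)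
        + normSq (fun j => (∑ i, A i i) / 2 * v j - ∑ k, v k * A j k) := by
    simp only [normSq, dot3, cross3, frobSq, Fin.sum_univ_three, Matrix.cons_val_zero,
      Matrix.cons_val_one, Matrix.head_cons, Matrix.cons_val_two, Matrix.tail_cons]
    ring
  nlinarith [normSq_nonneg' (fun j => (∑ i, A i i) / 2 * v j - ∑ i, v i * A i j),
    normSq_nonneg' (fun j => (∑ i, A i i) / 2 * v j - ∑ k, v k * A j k)]

/-- support transfer -/
lemma hcs_of {a : E3' → E3'} (hac : HasCompactSupport a) {f : E3' → ℝ}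
    (h : ∀ x, a x = 0 → f x = 0) : HasCompactSupport f := by
  refine IsCompact.of_isClosed_subset hac (isClosed_tsupport f) ?_
  refine closure_minimal ?_ (isClosed_tsupport a)
  intro x hx
  by_contra hxt
  exact hx (h x (image_eq_zero_of_notMem_tsupport hxt))

/-- the vector field whose divergence we integrate -/
def Vf (a : E3' → E3') (j : Fin 3) : E3' → ℝ := fun y =>
  (∑ i, a y i * a y i) *
    ((∑ k, a y k * pd (fun z => a z j) k y) - a y j * ∑ k, pd (fun z => a z k) k y)

lemma Vf_smooth {a : E3' → E3'} (ha : ContDiff ℝ (⊤ : ℕ∞) a) (j : Fin 3) :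
    ContDiff ℝ (⊤ : ℕ∞) (Vf a j) := by
  have hp : ∀ i, ContDiff ℝ (⊤ : ℕ∞) (fun x => a x i) := comp_smooth ha
  have hq : ∀ i k, ContDiff ℝ (⊤ : ℕ∞) (pd (fun x => a x i) k) := fun i k => pd_contDiff (hp i) k
  exact (ContDiff.sum fun i _ => (hp i).mul (hp i)).mul
    ((ContDiff.sum fun k _ => (hp k).mul (hq j k)).sub
      ((hp j).mul (ContDiff.sum fun k _ => hq k k)))

lemma Vf_zero {a : E3' → E3'} {x : E3'} (h : a x = 0) (j : Fin 3) : Vf a j x = 0 := by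
  simp [Vf, h]

/-- For a smooth compactly supported vector field `a`,
`∫ |a|²|∇a|² ≤ ∫ ((3/2)(div a)²|a|² + (a⬝curl a)² + 2|a × curl a|²)`. -/

theorem grad_weighted_estimate (a : (Fin 3 → ℝ) → Fin 3 → ℝ)
    (ha : ContDiff ℝ (⊤ : ℕ∞) a) (hac : HasCompactSupport a) :
    ∫ x, normSq (a x) * frobSq (jac a x)
      ≤ ∫ x, ((3 / 2) * divg a x ^ 2 * normSq (a x) + dot3 (a x) (curl a x) ^ 2
          + 2 * normSq (cross3 (a x) (curl a x))) := by
  classical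
  have hp : ∀ i, ContDiff ℝ (⊤ : ℕ∞) (fun x => a x i) := comp_smooth ha
  have hjac : ∀ (x : Fin 3 → ℝ) (i j : Fin 3),
      pd (fun y => a y i) j x = jac a x i j := fun x i j =>
    (fderiv_comp_apply ha i (e3 j) x).symm
  -- integrability and support facts
  have hAcont : ∀ i j, Continuous fun x => jac a x i j := by
    intro i j
    have : (fun x => jac a x i j) = pd (fun y => a y i) j :=
      funext fun x => (hjac x i j).symm
    rw [this]
    exact (pd_contDiff (hp i) j).continuous
  have hacont : ∀ i, Continuous fun x => a x i := fun i => (hp i).continuous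
  have hVsm : ∀ j, ContDiff ℝ (⊤ : ℕ∞) (Vf a j) := Vf_smooth ha
  have hVcs : ∀ j, HasCompactSupport (Vf a j) :=
    fun j => hcs_of hac fun x hx => Vf_zero hx j
  have hgi : ∀ j, Integrable (fun x => pd (Vf a j) j x) := by
    intro j
    have hcs2 : HasCompactSupport (fun x => pd (Vf a j) j x) :=
      (hVcs j).fderiv_apply ℝ (e3 j)
    exact ((pd_contDiff (hVsm j) j).continuous).integrable_of_hasCompactSupport hcs2
  have hg0 : ∫ x, (∑ j, pd (Vf a j) j x) = 0 := by
    rw [integral_finset_sum _ fun j _ => hgi j]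
    exact Finset.sum_eq_zero fun j _ => integral_pd_eq_zero (Vf a j) (hVsm j) (hVcs j) (e3 j)
  have hIg : Integrable (fun x => ∑ j, pd (Vf a j) j x) :=
    integrable_finset_sum _ fun j _ => hgi j
  -- integrability of both sides
  have hIl : Integrable (fun x => normSq (a x) * frobSq (jac a x)) := by
    apply Continuous.integrable_of_hasCompactSupport
    · unfold normSq frobSq
      exact (continuous_finset_sum _ fun i _ => (hacont i).pow 2).mul
        (continuous_finset_sum _ fun i _ =>
          continuous_finset_sum _ fun j _ => (hAcont i j).pow 2)
    · exact hcs_of hac fun x hx => by simp [hx, normSq]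
  have hIr : Integrable (fun x => (3 / 2) * divg a x ^ 2 * normSq (a x)
      + dot3 (a x) (curl a x) ^ 2 + 2 * normSq (cross3 (a x) (curl a x))) := by
    apply Continuous.integrable_of_hasCompactSupport
    · unfold divg curl dot3 cross3 normSq
      simp only [Fin.sum_univ_three, Matrix.cons_val_zero, Matrix.cons_val_one,
        Matrix.head_cons, Matrix.cons_val_two, Matrix.tail_cons]
      fun_prop
    · refine hcs_of hac fun x hx => ?_
      simp [hx, normSq, dot3, cross3, divg, curl, Fin.sum_univ_three]
  -- pointwise inequality
  have hpt : ∀ x, normSq (a x) * frobSq (jac a x)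
      ≤ ((3 / 2) * divg a x ^ 2 * normSq (a x) + dot3 (a x) (curl a x) ^ 2
          + 2 * normSq (cross3 (a x) (curl a x))) + ∑ j, pd (Vf a j) j x := by
    intro x
    have hns : (∑ i, a x i * a x i) = normSq (a x) := by simp [normSq, sq]
    have h : (∑ j, pd (Vf a j) j x)
        = (∑ j, (∑ i, 2 * a x i * pd (fun y => a y i) j x) *
            ((∑ k, a x k * pd (fun y => a y j) k x)
              - a x j * ∑ k, pd (fun y => a y k) k x))
          + (∑ i, a x i * a x i) *
            ((∑ j, ∑ k, pd (fun y => a y k) j x * pd (fun y => a y j) k x)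
              - (∑ k, pd (fun y => a y k) k x) ^ 2) :=
      div_identity (fun i y => a y i) hp x
    rw [hns] at h
    simp only [hjac] at h
    have hk := key_ineq (a x) (jac a x)
    unfold divg curl
    linarith [hk, h.ge]
  calc ∫ x, normSq (a x) * frobSq (jac a x)
      ≤ ∫ x, (((3 / 2) * divg a x ^ 2 * normSq (a x) + dot3 (a x) (curl a x) ^ 2
          + 2 * normSq (cross3 (a x) (curl a x))) + ∑ j, pd (Vf a j) j x) :=
        integral_mono hIl (hIr.add hIg) hpt
    _ = (∫ x, ((3 / 2) * divg a x ^ 2 * normSq (a x) + dot3 (a x) (curl a x) ^ 2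
          + 2 * normSq (cross3 (a x) (curl a x))))
        + ∫ x, ∑ j, pd (Vf a j) j x := integral_add hIr hIg
    _ = _ := by rw [hg0, add_zero]
end
end

section
/- Let d, d̃, w, w̃ ∈ ℝ³ with |d| = |d̃| = 1, d·w = 0 and d̃·w̃ = 0. Then (d − d̃)·(w − w̃) = (d×w − d̃×w̃)·(d̃×d). -/
open Matrix MeasureTheory
open scoped BigOperators

noncomputable section

/-! The identity is the Binet–Cauchy formula
`(a × b)·(c × e) = (a·c)(b·e) − (a·e)(b·c)` applied to both cross products on the right: the
constraints `|d| = |d̃| = 1`, `d·w = 0`, `d̃·w̃ = 0` reduce it to `−w·d̃ − w̃·d`, which is also what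
the left-hand side becomes. -/

theorem dot3_eq_dotProduct (a b : Fin 3 → ℝ) : dot3 a b = a ⬝ᵥ b := rfl

theorem normSq_eq_dotProduct_self (a : Fin 3 → ℝ) : normSq a = a ⬝ᵥ a := by
  simp only [normSq, dotProduct, sq]

/-- For unit vectors `d, d̃` and `w ⟂ d`, `w̃ ⟂ d̃`:
`(d − d̃)⬝(w − w̃) = (d×w − d̃×w̃)⬝(d̃×d)`. -/
theorem director_difference_identity (d dt w wt : Fin 3 → ℝ)
    (hd : normSq d = 1) (hdt : normSq dt = 1)
    (hw : dot3 d w = 0) (hwt : dot3 dt wt = 0) :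
    dot3 (d - dt) (w - wt) = dot3 (cross3 d w - cross3 dt wt) (cross3 dt d) := by
  rw [normSq_eq_dotProduct_self] at hd hdt
  simp only [dot3_eq_dotProduct, cross3_eq_crossProduct, dotProduct_sub,
    cross_dot_cross, dotProduct_comm] at hw hwt ⊢
  linear_combination (1 - d ⬝ᵥ dt) * (hw + hwt) + (dt ⬝ᵥ w) * hd + (d ⬝ᵥ wt) * hdt
end
end
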